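/- In PG(2,q^3) with line at infinity ℓ∞, let C̄ be an F_q-conic in an F_q-subplane π̄ secant to ℓ∞, and suppose C̄⁺ is exterior to ℓ∞ (so C̄ ∩ ℓ∞ = ∅ and C̄⁺ ∩ ℓ∞ = ∅). Then C̄⁺⁺ meets ℓ∞⁺⁺ in two distinct points P̄, Q̄ lying in ℓ∞⁺⁺∖ℓ∞; moreover Q̄ = P̄^{c̄_π} = P̄^{q^3}, P̄^{c̄_π^2} = P̄, and, setting b̄ = π̄ ∩ ℓ∞, P̄^{c̄_b} = P̄^{c̄_π} = Q̄. -/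

import Mathlib

/-!
Common set-up: an explicit model of the Bruck-Bose representation of PG(2,q^3) in PG(6,q),
of the Bose representation of PG(2,q^3) in PG(8,q), and of their cubic and sextic
field extensions.

`Fq`, `F3`, `F6` are the fields of orders `q`, `q^3`, `q^6`.

* PG(2,q^3) is `Projectivization F3 (Fin 3 → F3)`, with line at infinity `z = 0`.
* The ambient 7-dimensional `Fq`-space of PG(6,q) is `V6 = (Fin 2 → F3) × Fq`.
  Its extensions to `F3` and `F6` are modelled blockwise using the Galois splitting
  `F3 ⊗ F3 ≅ F3 × F3 × F3`:  `V63 = (Fin 3 → Fin 2 → F3) × F3` and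
  `V66 = (Fin 3 → Fin 2 → F6) × F6`, with the Frobenius collineation acting by a cyclic
  shift of the blocks composed with coordinatewise q-th powers (`tauBB`).
* The hyperplane at infinity is `{v | v.2 = 0}`; the regular 2-spread consists of
  the planes `{(l•(x,y),0) | l ∈ F3}`, whose extensions meet the transversal lines:
  the transversal line `g^{q^e}` is the set of vectors `gBlockVec e a b`.
* Similarly PG(8,q) has ambient `Fq`-space `Fin 3 → F3` with extensions
  `Fin 3 → Fin 3 → K` (`K = F3, F6`), the Bose spread plane of a point `(x:y:z)` being
  `{l•(x,y,z)}`; the transversal plane `Γ^{q^e}` is the block `e` (`GammaPlane e`),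
  and a point `X̄ = (x:y:z)` of PG(2,q^3) corresponds to the point of `Γ` with vector
  `blockVec 0 ![x,y,z]`.
-/

noncomputable section
open scoped Classical

/-- The projective point `P` is represented, up to a nonzero scalar, by the vector `w`. -/
def pe {K V : Type*} [DivisionRing K] [AddCommGroup V] [Module K V]
    (P : Projectivization K V) (w : V) : Prop :=
  ∃ c : K, c ≠ 0 ∧ P.rep = c • w

/-- `v ↦ B ⬝ v^q`, the vector form of a collineation `X ↦ B X^q`. -/
def cpiVec (q : ℕ) {K : Type*} [Field K] (B : Matrix (Fin 3) (Fin 3) K)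
    (v : Fin 3 → K) : Fin 3 → K :=
  B.mulVec fun i => v i ^ q

/-- `v ↦ D ⬝ v^q` on a line (pairs of coordinates). -/
def cbVec (q : ℕ) {K : Type*} [Field K] (D : Matrix (Fin 2) (Fin 2) K)
    (v : Fin 2 → K) : Fin 2 → K :=
  D.mulVec fun i => v i ^ q

/-- The vector of the Bruck-Bose ambient extension placing the pair `(a,b)` in
Galois block `e` (a vector on the transversal line `g^{q^e}`). -/
def gBlockVec {K : Type*} [Zero K] (e : Fin 3) (a b : K) : (Fin 3 → Fin 2 → K) × K :=
  (fun e' => if e' = e then ![a, b] else 0, 0)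

/-- The Frobenius collineation `X ↦ X^q` on (extensions of) the Bruck-Bose ambient space. -/
def tauBB (q : ℕ) {K : Type*} [Field K] (w : (Fin 3 → Fin 2 → K) × K) :
    (Fin 3 → Fin 2 → K) × K :=
  (fun e k => w.1 (e - 1) k ^ q, w.2 ^ q)

/-- The vector of the Bose ambient extension placing `u` in Galois block `e`. -/
def blockVec {K : Type*} [Zero K] (e : Fin 3) (u : Fin 3 → K) : Fin 3 → Fin 3 → K :=
  fun e' => if e' = e then u else 0

/-- The Frobenius collineation `X ↦ X^q` on (extensions of) the Bose ambient space. -/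
def tauBose (q : ℕ) {K : Type*} [Field K] (w : Fin 3 → Fin 3 → K) : Fin 3 → Fin 3 → K :=
  fun e i => w (e - 1) i ^ q

/-- The transversal plane `Γ^{q^e}` of the Bose spread (as a set of vectors). -/
def GammaPlane {K : Type*} [Zero K] (e : Fin 3) : Set (Fin 3 → Fin 3 → K) :=
  {w | ∀ e', e' ≠ e → w e' = 0}

/-- The scroll plane `⟪X⟫_π = ⟨X, (X^{c_π^5})^q, (X^{c_π^4})^{q^2}⟩` of the point `X ∈ Γ`
(or `Γ^{extension}`) with `Γ`-coordinate vector `u`, where `c_π` is given by the matrix `B`. -/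
def scrollSub (q : ℕ) {K : Type*} [Field K] (B : Matrix (Fin 3) (Fin 3) K)
    (u : Fin 3 → K) : Submodule K (Fin 3 → Fin 3 → K) :=
  Submodule.span K
    {blockVec 0 u,
     blockVec 1 (fun i => ((cpiVec q B)^[5] u) i ^ q),
     blockVec 2 (fun i => ((cpiVec q B)^[4] u) i ^ q ^ 2)}

/-- The `b`-scroll plane `⟪X⟫_b = ⟨X, (X^{c_b^5})^q, (X^{c_b^4})^{q^2}⟩` of the point `X` of
the transversal line `g` (or its extension) with coordinate pair `(a,b)`, where `c_b` is
given by the matrix `D`. -/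
def bScrollSub (q : ℕ) {K : Type*} [Field K] (D : Matrix (Fin 2) (Fin 2) K)
    (a b : K) : Submodule K ((Fin 3 → Fin 2 → K) × K) :=
  Submodule.span K
    {gBlockVec 0 a b,
     gBlockVec 1 (((cbVec q D)^[5] ![a, b]) 0 ^ q) (((cbVec q D)^[5] ![a, b]) 1 ^ q),
     gBlockVec 2 (((cbVec q D)^[4] ![a, b]) 0 ^ q ^ 2) (((cbVec q D)^[4] ![a, b]) 1 ^ q ^ 2)}

/-- `S` is a single point lying on one of the transversal planes (a T-point). -/
def IsTPointSet {K : Type*} [Field K]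
    (S : Set (Projectivization K (Fin 3 → Fin 3 → K))) : Prop :=
  ∃ w : Fin 3 → Fin 3 → K, w ≠ 0 ∧ (∃ e, w ∈ GammaPlane e) ∧ S = {P | pe P w}

/-- `S` is the point set of a T-line: a line meeting two of the transversal planes. -/
def IsTLineSet {K : Type*} [Field K]
    (S : Set (Projectivization K (Fin 3 → Fin 3 → K))) : Prop :=
  ∃ (e e' : Fin 3) (u u' : Fin 3 → Fin 3 → K), e ≠ e' ∧ u ≠ 0 ∧ u' ≠ 0 ∧
    u ∈ GammaPlane e ∧ u' ∈ GammaPlane e' ∧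
    S = {P | ∃ s t : K, P.rep = s • u + t • u'}

/-- `S` is the point set of a T-plane: a plane meeting all three transversal planes. -/
def IsTPlaneSet {K : Type*} [Field K]
    (S : Set (Projectivization K (Fin 3 → Fin 3 → K))) : Prop :=
  ∃ u : Fin 3 → Fin 3 → Fin 3 → K, (∀ e, u e ∈ GammaPlane e) ∧ LinearIndependent K u ∧
    S = {P | P.rep ∈ Submodule.span K (Set.range u)}

/-- `S` is empty, a T-point, a T-line or a T-plane. -/
def TClass {K : Type*} [Field K]
    (S : Set (Projectivization K (Fin 3 → Fin 3 → K))) : Prop :=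
  S = ∅ ∨ IsTPointSet S ∨ IsTLineSet S ∨ IsTPlaneSet S

/-- `ζ` : the linear embedding of the (extended) Bruck-Bose ambient space into the
(extended) Bose ambient space, realising PG(6,q) as the 6-space `Σ_{6,q}` of PG(8,q). -/
def zetaBB {K : Type*} [Field K] (w : (Fin 3 → Fin 2 → K) × K) : Fin 3 → Fin 3 → K :=
  fun e => ![w.1 e 0, w.1 e 1, w.2]

section BruckBose

variable (Fq F3 F6 : Type) [Field Fq] [Field F3] [Field F6]
  [Fintype Fq] [Fintype F3] [Fintype F6]
  [Algebra Fq F3] [Algebra F3 F6] [Algebra Fq F6] [IsScalarTower Fq F3 F6]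

/-- The points of `PG(2,q^3)`. -/
abbrev Pt2 := Projectivization F3 (Fin 3 → F3)

/-- The points of the quadratic extension `PG(2,q^6)`. -/
abbrev Pt2e := Projectivization F6 (Fin 3 → F6)

/-- The line at infinity `ℓ∞` of `PG(2,q^3)`. -/
def linf : Set (Pt2 F3) := {P | P.rep 2 = 0}

/-- The extended line at infinity `ℓ∞⁺⁺` of `PG(2,q^6)`. -/
def linfe : Set (Pt2e F6) := {P | P.rep 2 = 0}

/-- Representing vectors of the image under `M` of the standard `F_q`-subplane. -/
def subplaneVecs (M : Matrix (Fin 3) (Fin 3) F3) : Set (Fin 3 → F3) :=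
  {u | ∃ a : Fin 3 → Fq, u = M.mulVec fun i => algebraMap Fq F3 (a i)}

/-- The `F_q`-subplane `π̄` of `PG(2,q^3)` determined by the invertible matrix `M`:
the image under `M` of the standard rational subplane.  (Every `F_q`-subplane arises
in this way.) -/
def subplaneOf (M : Matrix (Fin 3) (Fin 3) F3) : Set (Pt2 F3) :=
  {P | ∃ u ∈ subplaneVecs Fq F3 M, pe P u}

/-- Representing vectors of the image under `M` of the standard `F_q`-conic. -/
def conicVecs (M : Matrix (Fin 3) (Fin 3) F3) : Set (Fin 3 → F3) :=
  {u | (∃ θ : Fq, u = M.mulVec fun i => algebraMap Fq F3 (![1, θ, θ ^ 2] i)) ∨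
    u = M.mulVec ![0, 0, 1]}

/-- The `F_q`-conic `C̄` of `PG(2,q^3)` determined by the invertible matrix `M`: the image
under `M` of the standard conic of the standard rational subplane.  (Every `F_q`-conic of
an `F_q`-subplane arises this way.) -/
def conicOf (M : Matrix (Fin 3) (Fin 3) F3) : Set (Pt2 F3) :=
  {P | ∃ u ∈ conicVecs Fq F3 M, pe P u}

/-- Representing vectors of `C̄⁺`, the unique `F_{q^3}`-conic containing `C̄ = conicOf M`. -/
def conicPlusVecs (M : Matrix (Fin 3) (Fin 3) F3) : Set (Fin 3 → F3) :=
  {u | (∃ θ : F3, u = M.mulVec ![1, θ, θ ^ 2]) ∨ u = M.mulVec ![0, 0, 1]}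

/-- `C̄⁺`, the unique non-degenerate conic of `PG(2,q^3)` containing `C̄ = conicOf M`. -/
def conicPlusOf (M : Matrix (Fin 3) (Fin 3) F3) : Set (Pt2 F3) :=
  {P | ∃ u ∈ conicPlusVecs F3 M, pe P u}

/-- Representing vectors of `C̄⁺⁺`, the unique conic of `PG(2,q^6)` containing `C̄⁺`. -/
def conicPPVecs (M : Matrix (Fin 3) (Fin 3) F3) : Set (Fin 3 → F6) :=
  {u | (∃ θ : F6, u = (M.map (algebraMap F3 F6)).mulVec ![1, θ, θ ^ 2]) ∨
    u = (M.map (algebraMap F3 F6)).mulVec ![0, 0, 1]}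

/-- `C̄⁺⁺`, the unique conic of the quadratic extension `PG(2,q^6)` containing `C̄⁺`. -/
def conicPPOf (M : Matrix (Fin 3) (Fin 3) F3) : Set (Pt2e F6) :=
  {P | ∃ u ∈ conicPPVecs F3 F6 M, pe P u}

/-- The subplane determined by `M` is secant to `ℓ∞` (meets it in `q+1` points). -/
def SecantSubplane (M : Matrix (Fin 3) (Fin 3) F3) : Prop :=
  (subplaneOf Fq F3 M ∩ linf F3).ncard = Fintype.card Fq + 1

/-- The subplane determined by `M` is tangent to `ℓ∞` (meets it in exactly one point). -/
def TangentSubplane (M : Matrix (Fin 3) (Fin 3) F3) : Prop :=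
  (subplaneOf Fq F3 M ∩ linf F3).ncard = 1

/-- The subplane determined by `M` is exterior to `ℓ∞` (disjoint from it). -/
def ExteriorSubplane (M : Matrix (Fin 3) (Fin 3) F3) : Prop :=
  subplaneOf Fq F3 M ∩ linf F3 = ∅

/-- The collineation `X ↦ B X^q` is a generator of the unique order-3 collineation group of
`PG(2,q^3)` fixing the subplane `subplaneOf M` pointwise (i.e. it is `c̄_π` or `c̄_π²`). -/
def IsCpiGen (M B : Matrix (Fin 3) (Fin 3) F3) : Prop :=
  IsUnit B.det ∧
  (∀ P ∈ subplaneOf Fq F3 M, pe P (cpiVec (Fintype.card Fq) B P.rep)) ∧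
  (∀ P : Pt2 F3, pe P ((cpiVec (Fintype.card Fq) B)^[3] P.rep)) ∧
  (∃ P : Pt2 F3, ¬ pe P (cpiVec (Fintype.card Fq) B P.rep))

/-- The map `X ↦ D X^q` on `ℓ∞` (coordinatised by pairs) is a generator of the unique
order-3 collineation group of `ℓ∞` fixing the `F_q`-subline `b̄ = subplaneOf M ∩ ℓ∞`
pointwise. -/
def IsCbGen (M : Matrix (Fin 3) (Fin 3) F3) (D : Matrix (Fin 2) (Fin 2) F3) : Prop :=
  IsUnit D.det ∧
  (∀ P ∈ subplaneOf Fq F3 M ∩ linf F3,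
    ∃ c : F3, c ≠ 0 ∧
      cbVec (Fintype.card Fq) D ![P.rep 0, P.rep 1] = c • ![P.rep 0, P.rep 1]) ∧
  (∀ u : Fin 2 → F3, u ≠ 0 → ∃ c : F3, c ≠ 0 ∧ (cbVec (Fintype.card Fq) D)^[3] u = c • u) ∧
  (∃ u : Fin 2 → F3, u ≠ 0 ∧ ¬ ∃ c : F3, c ≠ 0 ∧ cbVec (Fintype.card Fq) D u = c • u)

/-- `P' = P^{c̄_π}` where `c̄_π : X ↦ B X^q`. -/
def cptRel (B : Matrix (Fin 3) (Fin 3) F3) (P P' : Pt2 F3) : Prop :=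
  pe P' (cpiVec (Fintype.card Fq) B P.rep)

/-- `E` is one of the two `(π̄,ℓ∞)`-carriers lying on `ℓ∞` (for `π̄` exterior to `ℓ∞`):
`E ∈ ℓ∞` and the image of `E` under `c̄_π` or `c̄_π²` again lies on `ℓ∞`. -/
def IsCarrierOnLinf (B : Matrix (Fin 3) (Fin 3) F3) (E : Pt2 F3) : Prop :=
  E ∈ linf F3 ∧ ∃ E1 : Pt2 F3, cptRel Fq F3 B E E1 ∧ E1 ∈ linf F3

/-! ### The Bruck-Bose ambient spaces -/

/-- The 7-dimensional `Fq`-vector space underlying `PG(6,q)`. -/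
abbrev V6 := (Fin 2 → F3) × Fq

/-- The points of `PG(6,q)`. -/
abbrev Pt6 := Projectivization Fq (V6 Fq F3)

/-- The cubic extension of `V6`, underlying `PG(6,q^3)`. -/
abbrev V63 := (Fin 3 → Fin 2 → F3) × F3

/-- The points of `PG(6,q^3)`. -/
abbrev Pt63 := Projectivization F3 (V63 F3)

/-- The sextic extension of `V6`, underlying `PG(6,q^6)`. -/
abbrev V66 := (Fin 3 → Fin 2 → F6) × F6

/-- The points of `PG(6,q^6)`. -/
abbrev Pt66 := Projectivization F6 (V66 F6)

/-- The hyperplane at infinity `Σ∞` of `PG(6,q)` (as a point set). -/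
def inf6 : Set (Pt6 Fq F3) := {P | P.rep.2 = 0}

/-- The extended hyperplane at infinity `Σ∞^*` in `PG(6,q^3)`. -/
def inf63 : Set (Pt63 F3) := {P | P.rep.2 = 0}

/-- The extended hyperplane at infinity `Σ∞^☆` in `PG(6,q^6)`. -/
def inf66 : Set (Pt66 F6) := {P | P.rep.2 = 0}

/-- The vectors of the spread plane corresponding to the point `(x : y : 0)` of `ℓ∞`. -/
def spreadVecs (x y : F3) : Set (V6 Fq F3) := {v | ∃ l : F3, v = (![l * x, l * y], 0)}

/-- The points of the plane `[P]` of the regular 2-spread `S` corresponding to the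
point `P̄ = (x : y : 0)` of `ℓ∞`. -/
def spreadPts (x y : F3) : Set (Pt6 Fq F3) := {P | P.rep ∈ spreadVecs Fq F3 x y}

/-- `s` is (the point set of) a plane of the regular 2-spread `S`. -/
def IsSpreadPlane (s : Set (Pt6 Fq F3)) : Prop :=
  ∃ x y : F3, ¬(x = 0 ∧ y = 0) ∧ s = spreadPts Fq F3 x y

/-- The embedding of `V6` into its cubic extension `V63`. -/
def iota6 (v : V6 Fq F3) : V63 F3 :=
  (fun e k => v.1 k ^ Fintype.card Fq ^ (e : ℕ), algebraMap Fq F3 v.2)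

/-- The embedding of `V6` into its sextic extension `V66`. -/
def iota66 (v : V6 Fq F3) : V66 F6 :=
  (fun e k => algebraMap F3 F6 (v.1 k ^ Fintype.card Fq ^ (e : ℕ)), algebraMap Fq F6 v.2)

/-- The embedding of `V63` into `V66`. -/
def kappa6 (w : V63 F3) : V66 F6 :=
  (fun e k => algebraMap F3 F6 (w.1 e k), algebraMap F3 F6 w.2)

/-- A representing vector of `P^{q^e}` where `P` is the point of the transversal line `g`
with coordinate pair `(a,b) ∈ F_{q^3}²`. -/
def gOrbitVec3 (a b : F3) (e : Fin 3) : V63 F3 :=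
  gBlockVec e (a ^ Fintype.card Fq ^ (e : ℕ)) (b ^ Fintype.card Fq ^ (e : ℕ))

/-- A representing vector of `P^{q^e}` where `P` is the point of the extended transversal
line `g^☆` with coordinate pair `(a,b) ∈ F_{q^6}²`. -/
def gOrbitVec6 (a b : F6) (e : ℕ) : V66 F6 :=
  gBlockVec (Fin.ofNat 3 e) (a ^ Fintype.card Fq ^ e) (b ^ Fintype.card Fq ^ e)

/-- The vectors of the extension to `PG(6,q^3)` of the spread plane of `(x : y : 0)`. -/
def extSpreadVecs3 (x y : F3) : Set (V63 F3) :=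
  {w | ∃ c : Fin 3 → F3, w = (fun e =>
    ![c e * x ^ Fintype.card Fq ^ (e : ℕ), c e * y ^ Fintype.card Fq ^ (e : ℕ)], 0)}

/-- The vectors of the extension to `PG(6,q^6)` of the spread plane of `(x : y : 0)`. -/
def extSpreadVecs6 (x y : F3) : Set (V66 F6) :=
  {w | ∃ c : Fin 3 → F6, w = (fun e =>
    ![c e * algebraMap F3 F6 (x ^ Fintype.card Fq ^ (e : ℕ)),
      c e * algebraMap F3 F6 (y ^ Fintype.card Fq ^ (e : ℕ))], 0)}

/-- The point set in `PG(6,q)` of the `k`-dimensional normal rational curve with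
parametrising vectors `v 0, …, v k`:  `{(1,θ,…,θ^k)} ∪ {(0,…,0,1)}` in the frame `v`. -/
def nrcPts6 {k : ℕ} (v : Fin (k + 1) → V6 Fq F3) : Set (Pt6 Fq F3) :=
  {P | (∃ θ : Fq, pe P (∑ i : Fin (k + 1), θ ^ (i : ℕ) • v i)) ∨ pe P (v (Fin.last k))}

/-- The point set in `PG(6,q^3)` of the extension of the normal rational curve `v`. -/
def nrcPts63 {k : ℕ} (v : Fin (k + 1) → V6 Fq F3) : Set (Pt63 F3) :=
  {P | (∃ θ : F3, pe P (∑ i : Fin (k + 1), θ ^ (i : ℕ) • iota6 Fq F3 (v i))) ∨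
    pe P (iota6 Fq F3 (v (Fin.last k)))}

/-- The point set in `PG(6,q^6)` of the extension of the normal rational curve `v`. -/
def nrcPts66 {k : ℕ} (v : Fin (k + 1) → V6 Fq F3) : Set (Pt66 F6) :=
  {P | (∃ θ : F6, pe P (∑ i : Fin (k + 1), θ ^ (i : ℕ) • iota66 Fq F3 F6 (v i))) ∨
    pe P (iota66 Fq F3 F6 (v (Fin.last k)))}

/-- `N` is a `k`-dimensional normal rational curve of `PG(6,q)`. -/
def IsNRC (k : ℕ) (N : Set (Pt6 Fq F3)) : Prop :=
  ∃ v : Fin (k + 1) → V6 Fq F3, LinearIndependent Fq v ∧ N = nrcPts6 Fq F3 v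

/-- The exact-at-infinity Bruck-Bose representation `[C]` of a point set `C` of
`PG(2,q^3)`: affine points go to affine points, and a point of `ℓ∞` goes to the whole
corresponding spread plane. -/
def bbExact (C : Set (Pt2 F3)) : Set (Pt6 Fq F3) :=
  {Q | ∃ P ∈ C, (∃ x y : F3, pe P ![x, y, 1] ∧ pe Q (![x, y], (1 : Fq))) ∨
    (∃ x y : F3, pe P ![x, y, 0] ∧ Q ∈ spreadPts Fq F3 x y)}

/-- `N` is the Bruck-Bose representation (usual convention: linear components at infinity
ignored) of the point set `C` of `PG(2,q^3)`: `N` is contained in the exact-at-infinity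
representation of `C` and contains all of its affine points. -/
def corrBB (C : Set (Pt2 F3)) (N : Set (Pt6 Fq F3)) : Prop :=
  N ⊆ bbExact Fq F3 C ∧ ∀ Q ∈ bbExact Fq F3 C, Q ∉ inf6 Fq F3 → Q ∈ N

/-! ### The Bose ambient spaces -/

/-- The points of `PG(8,q^3)`. -/
abbrev Pt93 := Projectivization F3 (Fin 3 → Fin 3 → F3)

/-- The points of `PG(8,q^6)`. -/
abbrev Pt96 := Projectivization F6 (Fin 3 → Fin 3 → F6)

/-- The vectors of `Π_g^* = ⟨g, g^q, g^{q^2}⟩` in `PG(8,q^3)`, where `g` is the line of the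
transversal plane `Γ` corresponding to the line `l` of `PG(2,q^3)`. -/
def PiG3 (l : Submodule F3 (Fin 3 → F3)) : Set (Fin 3 → Fin 3 → F3) :=
  {w | ∀ e : Fin 3, ∃ v ∈ l, w e = fun i => v i ^ Fintype.card Fq ^ (e : ℕ)}

/-- The vectors of `Π_g^☆` in `PG(8,q^6)`. -/
def PiG6 (l : Submodule F3 (Fin 3 → F3)) : Set (Fin 3 → Fin 3 → F6) :=
  {w | ∀ e : Fin 3, w e ∈ Submodule.span F6
    {u : Fin 3 → F6 | ∃ v ∈ l, u = fun i => algebraMap F3 F6 (v i) ^ Fintype.card Fq ^ (e : ℕ)}}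

/-- The extension to `PG(2,q^6)` of the line `l` of `PG(2,q^3)`. -/
def extLineF6 (l : Submodule F3 (Fin 3 → F3)) : Submodule F6 (Fin 3 → F6) :=
  Submodule.span F6 {u | ∃ v ∈ l, u = fun i => algebraMap F3 F6 (v i)}

/-- The vectors of the point set of `V(⟦C⟧)^*` in `PG(8,q^3)` for the `F_q`-conic of `M`:
the union of the `π`-scroll planes of the points of `C⁺` (with `c_π` given by `B`). -/
def boseVar3 (M B : Matrix (Fin 3) (Fin 3) F3) : Set (Fin 3 → Fin 3 → F3) :=
  {w | ∃ u ∈ conicPlusVecs F3 M, w ∈ scrollSub (Fintype.card Fq) B u}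

/-- The vectors of the point set of `V(⟦C⟧)^☆` in `PG(8,q^6)`: the union of the
`π`-scroll planes of the points of `C⁺⁺`. -/
def boseVar6 (M B : Matrix (Fin 3) (Fin 3) F3) : Set (Fin 3 → Fin 3 → F6) :=
  {w | ∃ u ∈ conicPPVecs F3 F6 M,
    w ∈ scrollSub (Fintype.card Fq) (B.map (algebraMap F3 F6)) u}

/-- The point set of the variety-extension `V([C])^*` in `PG(6,q^3)`:
`V(⟦C⟧)^* ∩ Σ_{6,q}^*`, transported to the Bruck-Bose model via `ζ`. -/
def bbVar3 (M B : Matrix (Fin 3) (Fin 3) F3) : Set (Pt63 F3) :=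
  {P | zetaBB P.rep ∈ boseVar3 Fq F3 M B}

/-- The point set of the variety-extension `V([C])^☆` in `PG(6,q^6)`. -/
def bbVar6 (M B : Matrix (Fin 3) (Fin 3) F3) : Set (Pt66 F6) :=
  {P | zetaBB P.rep ∈ boseVar6 Fq F3 F6 M B}

/-- `L` is a T-line of `Σ∞^*`: a line meeting two of the transversal lines `g,g^q,g^{q^2}`
of the regular 2-spread. -/
def IsTLineBB (L : Submodule F3 (V63 F3)) : Prop :=
  ∃ (e e' : Fin 3) (a b a' b' : F3), e ≠ e' ∧ ¬(a = 0 ∧ b = 0) ∧ ¬(a' = 0 ∧ b' = 0) ∧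
    L = Submodule.span F3 {gBlockVec e a b, gBlockVec e' a' b'}

/-- The T-line `h^{q^e}` where `h = E (E^{c_π})^{q^2}`, `E` (resp. `E^{c_π}`) being the point
of the transversal `g` with coordinate pair `(a,b)` (resp. `(a',b')`). -/
def hLine (a b a' b' : F3) (e : Fin 3) : Submodule F3 (V63 F3) :=
  Submodule.span F3
    {gBlockVec e (a ^ Fintype.card Fq ^ (e : ℕ)) (b ^ Fintype.card Fq ^ (e : ℕ)),
     gBlockVec (e + 2) (a' ^ Fintype.card Fq ^ ((e : ℕ) + 2))
       (b' ^ Fintype.card Fq ^ ((e : ℕ) + 2))}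

/-! ### 3-special normal rational curves -/

/-- The pair `(a,b) ∈ F_{q^6}²` is proportional to an `F_{q^3}`-rational pair, i.e. the
corresponding point of the extended transversal line `g^☆` lies on `g`. -/
def rationalPair (a b : F6) : Prop :=
  ∃ (a0 b0 : F3) (c : F6), c ≠ 0 ∧ a = c * algebraMap F3 F6 a0 ∧ b = c * algebraMap F3 F6 b0

/-- The weight `w(P)` of a point `P` of `PG(5,q^6)` (given by a representing vector `w`):
1 if `P` is on an extended transversal line of the spread, 2 if not but `P` is on a line
meeting two of the extended transversal lines, 3 otherwise. -/
def weightV (w : V66 F6) : ℕ :=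
  if ∃ (e : Fin 3) (a b : F6), w = gBlockVec e a b then 1
  else if ∃ (e e' : Fin 3) (a b a' b' s t : F6), e ≠ e' ∧
      w = s • gBlockVec e a b + t • gBlockVec e' a' b' then 2
  else 3

/-- The orbit size `o(P)` of the point with representing vector `w` under the Frobenius
collineation `X ↦ X^q`. -/
def orbitSizeV (w : V66 F6) : ℕ :=
  Set.ncard {Q : Pt66 F6 | ∃ n : ℕ, pe Q ((tauBB (Fintype.card Fq))^[n] w)}

/-- `s(P) = 1` if `P` lies in an extended plane of the spread `S`, else `s(P) = 2`. -/
def sValV (w : V66 F6) : ℕ :=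
  if ∃ x y : F3, ¬(x = 0 ∧ y = 0) ∧ w ∈ extSpreadVecs6 Fq F3 F6 x y then 1 else 2

/-- The point of `PG(5,q^6)` with representing vector `w` is `S`-happy:
`w(P) ⬝ o(P) = 3 s(P)`. -/
def HappyV (w : V66 F6) : Prop :=
  weightV F6 w * orbitSizeV Fq F6 w = 3 * sValV Fq F3 F6 w

/-- The polynomial whose homogeneous roots give the points at infinity of the normal
rational curve parametrised by `v` (the last coordinates of the frame). -/
def infPoly {k : ℕ} (v : Fin (k + 1) → V6 Fq F3) : Polynomial Fq :=
  ∑ i : Fin (k + 1), Polynomial.C (v i).2 * Polynomial.X ^ (i : ℕ)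

/-- The parametrised normal rational curve `v` is 3-special with respect to the regular
2-spread `S`: it is not contained in `Σ∞`, all its points at infinity (with multiplicity,
including the point at the infinite parameter value) are defined over `F_{q^6}` and are
`S`-happy, and their weights sum to 6. -/
def Is3SpecialData {k : ℕ} (v : Fin (k + 1) → V6 Fq F3) : Prop :=
  infPoly Fq F3 v ≠ 0 ∧
  ((infPoly Fq F3 v).map (algebraMap Fq F6)).roots.card =
    ((infPoly Fq F3 v).map (algebraMap Fq F6)).natDegree ∧
  (∀ θ ∈ ((infPoly Fq F3 v).map (algebraMap Fq F6)).roots,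
    HappyV Fq F3 F6 (∑ i : Fin (k + 1), θ ^ (i : ℕ) • iota66 Fq F3 F6 (v i))) ∧
  (((infPoly Fq F3 v).map (algebraMap Fq F6)).natDegree < k →
    HappyV Fq F3 F6 (iota66 Fq F3 F6 (v (Fin.last k)))) ∧
  (((infPoly Fq F3 v).map (algebraMap Fq F6)).roots.map fun θ =>
      weightV F6 (∑ i : Fin (k + 1), θ ^ (i : ℕ) • iota66 Fq F3 F6 (v i))).sum +
    (k - ((infPoly Fq F3 v).map (algebraMap Fq F6)).natDegree) *
      weightV F6 (iota66 Fq F3 F6 (v (Fin.last k))) = 6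

/-- `N` is a 3-special `k`-dimensional normal rational curve of `PG(6,q)` with respect to
the regular 2-spread `S`. -/
def Is3Special (k : ℕ) (N : Set (Pt6 Fq F3)) : Prop :=
  ∃ v : Fin (k + 1) → V6 Fq F3, LinearIndependent Fq v ∧ N = nrcPts6 Fq F3 v ∧
    Is3SpecialData Fq F3 F6 v

end BruckBose

/-!
In the coordinates given by `M`, the collineation `c̄_π` is the Frobenius map: with
`B = M (M^{(q)})⁻¹` one has `B (M v)^q = M v^q`.  Secancy of `π̄` forces the row of `M` cutting
out `ℓ∞` to be a multiple `l • t` of a row `t` over `F_q`, so the points of `C̄⁺⁺ ∩ ℓ∞⁺⁺` are the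
`M (1, θ, θ²)` with `θ` a root of `t₂ X² + t₁ X + t₀ ∈ F_q[X]`.  Since `C̄⁺` is exterior to `ℓ∞`,
this quadratic has no root in `F_{q³}`, so it is irreducible over `F_q` and its roots in `F_{q⁶}`
are `θ ≠ θ^q`, with `θ^{q²} = θ`.  Hence `c̄_π` swaps `P̄` and `Q̄`, and `Q̄ = P̄^{q³}`.  The last
row of `B` is a multiple of `(0, 0, 1)`, so `c̄_π` preserves `ℓ∞` and acts there as `c̄_b`, through
the upper-left `2 × 2` block of `B`.
-/

open Polynomial Matrix

section Projective

variable {K V : Type*} [Field K] [AddCommGroup V] [Module K V]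

lemma pe_mk (w : V) (hw : w ≠ 0) : pe (Projectivization.mk K w hw) w := by
  obtain ⟨a, ha⟩ := Projectivization.exists_smul_eq_mk_rep K w hw
  exact ⟨a, a.ne_zero, ha.symm⟩

lemma pe_rep (P : Projectivization K V) : pe P P.rep :=
  ⟨1, one_ne_zero, (one_smul K _).symm⟩

lemma pe.ne_zero {P : Projectivization K V} {w : V} (h : pe P w) : w ≠ 0 := by
  rintro rfl
  obtain ⟨c, -, h⟩ := h
  exact P.rep_nonzero (by simpa using h)

lemma pe.eq_mk {P : Projectivization K V} {w : V} (h : pe P w) :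
    P = Projectivization.mk K w h.ne_zero := by
  obtain ⟨c, hc, hrep⟩ := h
  conv_lhs => rw [← Projectivization.mk_rep P]
  rw [Projectivization.mk_eq_mk_iff]
  exact ⟨Units.mk0 c hc, hrep.symm⟩

lemma pe.unique {P P' : Projectivization K V} {w : V} (h : pe P w) (h' : pe P' w) : P = P' :=
  h.eq_mk.trans h'.eq_mk.symm

lemma pe.smul {P : Projectivization K V} {w : V} (h : pe P w) {d : K} (hd : d ≠ 0) :
    pe P (d • w) := by
  obtain ⟨c, hc, hrep⟩ := h
  exact ⟨c * d⁻¹, by simp [hc, hd], by rw [hrep, smul_smul, inv_mul_cancel_right₀ hd]⟩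

lemma pe.of_smul {P : Projectivization K V} {c : K} {w : V} (h : pe P (c • w)) : pe P w := by
  obtain ⟨d, -, hrep⟩ := h
  refine ⟨d * c, fun h0 => P.rep_nonzero ?_, by rw [hrep, smul_smul]⟩
  rw [hrep, smul_smul, h0, zero_smul]

lemma pe.apply_eq_zero_iff {ι : Type*} {P : Projectivization K (ι → K)} {w : ι → K} (h : pe P w)
    (i : ι) : P.rep i = 0 ↔ w i = 0 := by
  obtain ⟨c, hc, hrep⟩ := h
  simp [hrep, hc]

end Projective

section Matrices

variable {K : Type*} [Field K] {n : Type*} [Fintype n]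

lemma Matrix.map_mul_map_pow_eq {L : Type*} [Field L] (f : K →+* L) {m : ℕ} {A B : Matrix n n K}
    (h : B * A.map (· ^ m) = A) : B.map f * (A.map f).map (· ^ m) = A.map f := by
  have : (A.map f).map (· ^ m) = (A.map (· ^ m)).map f := by
    ext i j
    simp
  rw [this, ← Matrix.map_mul, h]

variable [DecidableEq n]

lemma Matrix.mulVec_injective_of_isUnit_det {A : Matrix n n K} (hA : IsUnit A.det) :
    Function.Injective A.mulVec :=
  Matrix.mulVec_injective_iff_isUnit.mpr ((A.isUnit_iff_isUnit_det).mpr hA)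

lemma Matrix.mulVec_ne_zero_of_isUnit_det {A : Matrix n n K} (hA : IsUnit A.det) {v : n → K}
    (hv : v ≠ 0) : A *ᵥ v ≠ 0 := fun h =>
  hv (Matrix.mulVec_injective_of_isUnit_det hA (h.trans (mulVec_zero A).symm))

lemma Matrix.isUnit_det_map {L : Type*} [Field L] (f : K →+* L) {A : Matrix n n K}
    (hA : IsUnit A.det) : IsUnit (A.map f).det := by
  rw [← RingHom.mapMatrix_apply, ← RingHom.map_det]
  exact hA.map f

lemma Matrix.row_eq_single_of_mul_eq {A B M : Matrix n n K} (hBA : B * A = M)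
    (hA : IsUnit A.det) {i : n} {c : K} (h : M i = c • A i) : B i = Pi.single i c :=
  Matrix.vecMul_injective_iff_isUnit.mpr ((A.isUnit_iff_isUnit_det).mpr hA) <| by
    simp only [Matrix.single_vecMul]
    rw [← hBA] at h
    exact h

end Matrices

section Frobenius

variable (k : Type*) {K : Type*} [Field k] [Fintype k] [Field K] [Algebra k K]

lemma mulVec_pow_card {m n : Type*} [Fintype n] (A : Matrix m n K) (v : n → K) :
    (A *ᵥ v) ^ Fintype.card k = A.map (· ^ Fintype.card k) *ᵥ v ^ Fintype.card k := by
  funext i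
  exact RingHom.map_mulVec (FiniteField.frobeniusAlgHom k K : K →+* K) A v i

lemma algebraMap_comp_pow_card {n : Type*} (a : n → k) :
    (fun i => algebraMap k K (a i)) ^ Fintype.card k = fun i => algebraMap k K (a i) := by
  funext i
  simp [← map_pow, FiniteField.pow_card]

lemma isUnit_det_map_pow_card {n : Type*} [Fintype n] [DecidableEq n] {A : Matrix n n K}
    (hA : IsUnit A.det) : IsUnit (A.map (· ^ Fintype.card k)).det :=
  Matrix.isUnit_det_map (FiniteField.frobeniusAlgHom k K : K →+* K) hA

lemma mem_range_algebraMap_of_pow_card_eq_self {x : K} (hx : x ^ Fintype.card k = x) :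
    x ∈ Set.range (algebraMap k K) := by
  have hq := Fintype.one_lt_card (α := k)
  have hroots : ((X ^ Fintype.card k - X : k[X]).map (algebraMap k K)).roots =
      Finset.univ.val.map (algebraMap k K) := by
    rw [← roots_map_of_injective_of_card_eq_natDegree (algebraMap k K).injective,
      FiniteField.roots_X_pow_card_sub_X]
    rw [FiniteField.roots_X_pow_card_sub_X, FiniteField.X_pow_card_sub_X_natDegree_eq k hq]
    rfl
  have hx' : x ∈ ((X ^ Fintype.card k - X : k[X]).map (algebraMap k K)).roots := by
    rw [mem_roots (Polynomial.map_ne_zero (FiniteField.X_pow_card_sub_X_ne_zero k hq))]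
    simp [hx]
  rw [hroots] at hx'
  simpa using hx'

lemma exists_pow_card_ne_self [Fintype K] (h : Fintype.card k < Fintype.card K) :
    ∃ ω : K, ω ^ Fintype.card k ≠ ω := by
  by_contra! hfix
  have hsurj : Function.Surjective (algebraMap k K) := fun x =>
    mem_range_algebraMap_of_pow_card_eq_self k (hfix x)
  exact (Fintype.card_le_of_surjective _ hsurj).not_gt h

lemma aeval_pow_card_eq_zero {g : k[X]} {z : K} (hz : aeval z g = 0) :
    aeval (z ^ Fintype.card k) g = 0 := by
  simpa [hz] using aeval_algHom_apply (FiniteField.frobeniusAlgHom k K) z g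

end Frobenius

section Quadratic

lemma eq_or_eq_of_quadratic_eq_zero {K : Type*} [Field K] {a b c x y z : K} (ha : a ≠ 0)
    (hxy : x ≠ y) (hx : a * x ^ 2 + b * x + c = 0) (hy : a * y ^ 2 + b * y + c = 0)
    (hz : a * z ^ 2 + b * z + c = 0) : z = x ∨ z = y := by
  have hsum : a * (x + y) + b = 0 := by
    have : (x - y) * (a * (x + y) + b) = 0 := by linear_combination hx - hy
    exact (mul_eq_zero.mp this).resolve_left (sub_ne_zero.mpr hxy)
  by_contra! hne
  have : (z - x) * (a * (z - y)) = 0 := by linear_combination hz - hx - (z - x) * hsum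
  rcases mul_eq_zero.mp this with h | h
  · exact hne.1 (sub_eq_zero.mp h)
  · exact hne.2 (sub_eq_zero.mp ((mul_eq_zero.mp h).resolve_left ha))

def rowQuadratic {k : Type*} [Field k] (t : Fin 3 → k) : k[X] :=
  C (t 2) * X ^ 2 + C (t 1) * X + C (t 0)

lemma mulVec_veronese_apply_two {k K : Type*} [Field k] [Field K] [Algebra k K]
    {A : Matrix (Fin 3) (Fin 3) K} {l : K} {t : Fin 3 → k}
    (h : ∀ j, A 2 j = t j • l) (z : K) :
    (A *ᵥ ![1, z, z ^ 2]) 2 = l * aeval z (rowQuadratic t) := by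
  simp [rowQuadratic, Matrix.mulVec, dotProduct, Fin.sum_univ_three, h, Algebra.smul_def]
  ring

variable {k K : Type*} [Field k] [Fintype k] [Field K] [Fintype K] [Algebra k K]

lemma Irreducible.exists_aeval_eq_zero_of_natDegree_dvd {g : k[X]} (hg : Irreducible g) {n : ℕ}
    (hn : g.natDegree ∣ n) (hK : Fintype.card K = Fintype.card k ^ n) :
    ∃ θ : K, aeval θ g = 0 ∧ θ ^ Fintype.card k ^ g.natDegree = θ := by
  have hdvd : g ∣ X ^ Fintype.card k ^ g.natDegree - X := by
    rw [← Nat.card_eq_fintype_card]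
    exact (hg.natDegree_dvd_iff_dvd_X_pow_card_pow_sub_X).mp dvd_rfl
  have hdvd' : g.map (algebraMap k K) ∣ (X ^ Fintype.card K - X : k[X]).map (algebraMap k K) :=
    Polynomial.map_dvd _ (hK ▸ hdvd.trans (dvd_pow_pow_sub_self_of_dvd hn))
  have hsplit := ((FiniteField.isSplittingField_sub K k).splits).of_dvd
    (Polynomial.map_ne_zero (FiniteField.X_pow_card_sub_X_ne_zero k
      (hK ▸ Fintype.one_lt_card))) hdvd'
  obtain ⟨θ, hθ⟩ := hsplit.exists_eval_eq_zero (by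
    rw [degree_map]
    exact (degree_pos_of_irreducible hg).ne')
  rw [eval_map_algebraMap] at hθ
  refine ⟨θ, hθ, ?_⟩
  obtain ⟨r, hr⟩ := hdvd
  have := congrArg (aeval θ) hr
  rw [map_mul, hθ, zero_mul] at this
  simpa [sub_eq_zero] using this

theorem exists_conjugate_roots_rowQuadratic {t : Fin 3 → k} (ht : t 2 ≠ 0)
    (hroot : ∀ x : k, eval x (rowQuadratic t) ≠ 0) {n : ℕ}
    (hK : Fintype.card K = Fintype.card k ^ n) (hn : 2 ∣ n) :
    ∃ θ : K, θ ^ Fintype.card k ≠ θ ∧ θ ^ Fintype.card k ^ 2 = θ ∧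
      ∀ z : K, aeval z (rowQuadratic t) = 0 ↔ z = θ ∨ z = θ ^ Fintype.card k := by
  have hdeg : (rowQuadratic t).natDegree = 2 := natDegree_quadratic ht
  have hirr : Irreducible (rowQuadratic t) :=
    (irreducible_iff_roots_eq_zero_of_degree_le_three hdeg.ge (by omega)).mpr
      (Multiset.eq_zero_of_forall_notMem fun x hx => hroot x (mem_roots'.mp hx).2)
  obtain ⟨θ, hθ, hθ2⟩ := hirr.exists_aeval_eq_zero_of_natDegree_dvd (hdeg ▸ hn) hK
  rw [hdeg] at hθ2
  have hθq := aeval_pow_card_eq_zero k hθ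
  have hne : θ ^ Fintype.card k ≠ θ := fun h => by
    obtain ⟨x, rfl⟩ := mem_range_algebraMap_of_pow_card_eq_self k h
    rw [aeval_algebraMap_apply_eq_algebraMap_eval, map_eq_zero] at hθ
    exact hroot x hθ
  refine ⟨θ, hne, hθ2, fun z => ⟨fun hz => ?_, by rintro (rfl | rfl) <;> assumption⟩⟩
  have hquad : ∀ w : K, aeval w (rowQuadratic t) =
      algebraMap k K (t 2) * w ^ 2 + algebraMap k K (t 1) * w + algebraMap k K (t 0) := by
    simp [rowQuadratic]
  rw [hquad] at hθ hθq hz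
  exact eq_or_eq_of_quadratic_eq_zero (by simpa using ht) hne.symm hθ hθq hz

end Quadratic

section FrobeniusConjugate

variable {K : Type*} [Field K]

lemma cpiVec_smul (q : ℕ) (B : Matrix (Fin 3) (Fin 3) K) (c : K) (v : Fin 3 → K) :
    cpiVec q B (c • v) = c ^ q • cpiVec q B v := by
  simp only [cpiVec]
  rw [← Matrix.mulVec_smul]
  congr 1
  funext i
  simp [mul_pow]

lemma pe_cpiVec_rep_of_pe {q : ℕ} {B : Matrix (Fin 3) (Fin 3) K}
    {P : Projectivization K (Fin 3 → K)} {w : Fin 3 → K} (hP : pe P w) (hw : cpiVec q B w = w) :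
    pe P (cpiVec q B P.rep) := by
  obtain ⟨c, hc, hrep⟩ := hP
  rw [hrep, cpiVec_smul, hw]
  exact pe.smul ⟨c, hc, hrep⟩ (pow_ne_zero _ hc)

variable (k : Type*) [Field k] [Fintype k] [Algebra k K] {A B : Matrix (Fin 3) (Fin 3) K}

lemma exists_mul_map_pow_card_eq (hA : IsUnit A.det) :
    ∃ B : Matrix (Fin 3) (Fin 3) K, IsUnit B.det ∧ B * A.map (· ^ Fintype.card k) = A := by
  have hAq := isUnit_det_map_pow_card k hA
  refine ⟨A * (A.map (· ^ Fintype.card k))⁻¹, ?_, Matrix.nonsing_inv_mul_cancel_right _ _ hAq⟩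
  rw [Matrix.det_mul]
  exact hA.mul (Matrix.isUnit_nonsing_inv_det _ hAq)

lemma exists_mul_map_pow_card_eq_of_row (hA : IsUnit A.det) {l : K} {t : Fin 3 → k}
    (ht : ∀ j, A 2 j = t j • l) :
    ∃ B : Matrix (Fin 3) (Fin 3) K, IsUnit B.det ∧ B * A.map (· ^ Fintype.card k) = A ∧
      B 2 0 = 0 ∧ B 2 1 = 0 := by
  have hl : l ≠ 0 := by
    rintro rfl
    exact hA.ne_zero (Matrix.det_eq_zero_of_row_eq_zero 2 (by simp [ht]))
  have hrow : A 2 = (l / l ^ Fintype.card k) • A.map (· ^ Fintype.card k) 2 := by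
    funext j
    simp only [Pi.smul_apply, Matrix.map_apply, ht, smul_eq_mul, Algebra.smul_def, mul_pow,
      ← map_pow, FiniteField.pow_card]
    field_simp
  obtain ⟨B, hB, hBA⟩ := exists_mul_map_pow_card_eq k hA
  have hB2 := Matrix.row_eq_single_of_mul_eq hBA (isUnit_det_map_pow_card k hA) hrow
  exact ⟨B, hB, hBA, by simp [hB2], by simp [hB2]⟩

lemma cpiVec_mulVec (hBA : B * A.map (· ^ Fintype.card k) = A) (v : Fin 3 → K) :
    cpiVec (Fintype.card k) B (A *ᵥ v) = A *ᵥ v ^ Fintype.card k := by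
  change B *ᵥ (A *ᵥ v) ^ Fintype.card k = _
  rw [mulVec_pow_card k, Matrix.mulVec_mulVec, hBA]

lemma iterate_cpiVec_mulVec (hBA : B * A.map (· ^ Fintype.card k) = A) (n : ℕ) (v : Fin 3 → K) :
    (cpiVec (Fintype.card k) B)^[n] (A *ᵥ v) = A *ᵥ v ^ Fintype.card k ^ n := by
  induction n with
  | zero => simp
  | succ n ih => rw [Function.iterate_succ_apply', ih, cpiVec_mulVec k hBA, ← pow_mul, pow_succ]

lemma pe_iterate_cpiVec_rep (hBA : B * A.map (· ^ Fintype.card k) = A) (n : ℕ)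
    {P P' : Projectivization K (Fin 3 → K)} {w : Fin 3 → K}
    (hP : pe P (A *ᵥ w)) (hP' : pe P' (A *ᵥ w ^ Fintype.card k ^ n)) :
    pe P' ((cpiVec (Fintype.card k) B)^[n] P.rep) := by
  obtain ⟨c, hc, hrep⟩ := hP
  rw [hrep, ← Matrix.mulVec_smul, iterate_cpiVec_mulVec k hBA, _root_.smul_pow,
    Matrix.mulVec_smul]
  exact hP'.smul (pow_ne_zero _ hc)

lemma exists_eq_smul_pow_of_pe_cpiVec (hBA : B * A.map (· ^ Fintype.card k) = A) (hA : IsUnit A.det)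
    {P : Projectivization K (Fin 3 → K)}
    {v : Fin 3 → K} (hP : pe P (A *ᵥ v)) (h : pe P (cpiVec (Fintype.card k) B P.rep)) :
    ∃ c : K, v = c • v ^ Fintype.card k := by
  obtain ⟨c, hc, hrep⟩ := hP
  obtain ⟨d, -, hd⟩ := h
  rw [hrep, cpiVec_smul, cpiVec_mulVec k hBA, smul_smul, ← Matrix.mulVec_smul,
    ← Matrix.mulVec_smul] at hd
  refine ⟨c⁻¹ * (d * c ^ Fintype.card k), ?_⟩
  rw [← smul_smul, ← Matrix.mulVec_injective_of_isUnit_det hA hd, smul_smul, inv_mul_cancel₀ hc,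
    one_smul]

lemma iterate_three_cpiVec_eq_self [Fintype K] (hBA : B * A.map (· ^ Fintype.card k) = A)
    (hK : Fintype.card K = Fintype.card k ^ 3)
    (hA : IsUnit A.det) (w : Fin 3 → K) : (cpiVec (Fintype.card k) B)^[3] w = w := by
  obtain ⟨v, rfl⟩ := Matrix.mulVec_surjective_iff_isUnit.mpr ((A.isUnit_iff_isUnit_det).mpr hA) w
  have hv3 : v ^ Fintype.card k ^ 3 = v := by
    funext i
    exact hK ▸ FiniteField.pow_card (v i)
  rw [iterate_cpiVec_mulVec k hBA, hv3]

end FrobeniusConjugate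

section LineAtInfinity

variable {K : Type*} [Field K]

def linfEmbed (u : Fin 2 → K) : Fin 3 → K := ![u 0, u 1, 0]

lemma linfEmbed_injective : Function.Injective (linfEmbed (K := K)) := fun u v h => by
  funext i
  fin_cases i
  exacts [congrFun h 0, congrFun h 1]

lemma linfEmbed_smul (c : K) (u : Fin 2 → K) : linfEmbed (c • u) = c • linfEmbed u := by
  funext i
  fin_cases i <;> simp [linfEmbed]

lemma linfEmbed_of_apply_two_eq_zero {w : Fin 3 → K} (hw : w 2 = 0) :
    linfEmbed ![w 0, w 1] = w := by
  funext i
  fin_cases i <;> simp [linfEmbed, hw]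

lemma pe.linfEmbed {P : Projectivization K (Fin 3 → K)} {w : Fin 3 → K} (hP : pe P w)
    (hw : w 2 = 0) : pe P ![w 0, w 1, 0] :=
  (congrArg (pe P) (linfEmbed_of_apply_two_eq_zero hw)).mpr hP

variable {B : Matrix (Fin 3) (Fin 3) K}

lemma cpiVec_linfEmbed (hB0 : B 2 0 = 0) (hB1 : B 2 1 = 0) {q : ℕ} (hq : q ≠ 0)
    (u : Fin 2 → K) :
    cpiVec q B (linfEmbed u) = linfEmbed (cbVec q (B.submatrix Fin.castSucc Fin.castSucc) u) := by
  funext i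
  fin_cases i <;> simp [cpiVec, cbVec, linfEmbed, Matrix.mulVec, dotProduct, Fin.sum_univ_three,
    Fin.sum_univ_two, hB0, hB1, hq]

lemma det_eq_mul_det_submatrix_castSucc (hB0 : B 2 0 = 0) (hB1 : B 2 1 = 0) :
    B.det = B 2 2 * (B.submatrix Fin.castSucc Fin.castSucc).det := by
  simp [Matrix.det_fin_three, Matrix.det_fin_two, hB0, hB1]
  ring

lemma cbVec_submatrix_castSucc_pair (k : Type*) [Field k] [Fintype k] [Algebra k K]
    {A : Matrix (Fin 3) (Fin 3) K} (hBA : B * A.map (· ^ Fintype.card k) = A)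
    (hB0 : B 2 0 = 0) (hB1 : B 2 1 = 0) {w : Fin 3 → K} (hw : (A *ᵥ w) 2 = 0)
    (hw' : (A *ᵥ w ^ Fintype.card k) 2 = 0) :
    cbVec (Fintype.card k) (B.submatrix Fin.castSucc Fin.castSucc) ![(A *ᵥ w) 0, (A *ᵥ w) 1] =
      ![(A *ᵥ w ^ Fintype.card k) 0, (A *ᵥ w ^ Fintype.card k) 1] :=
  linfEmbed_injective <| by
    rw [← cpiVec_linfEmbed hB0 hB1 Fintype.card_ne_zero, linfEmbed_of_apply_two_eq_zero hw,
      cpiVec_mulVec k hBA, linfEmbed_of_apply_two_eq_zero hw']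

lemma exists_ne_zero_not_eigen_cbVec {q : ℕ} (hq : q ≠ 0) (D : Matrix (Fin 2) (Fin 2) K) {ω : K}
    (hω : ω ^ q ≠ ω) : ∃ u : Fin 2 → K, u ≠ 0 ∧ ¬∃ c : K, c ≠ 0 ∧ cbVec q D u = c • u := by
  by_contra! h
  have eigen : ∀ a b : K, a = 1 ∨ b = 1 → ∃ c : K, c ≠ 0 ∧
      D 0 0 * a ^ q + D 0 1 * b ^ q = c * a ∧ D 1 0 * a ^ q + D 1 1 * b ^ q = c * b := by
    intro a b hab
    obtain ⟨c, hc, hcb⟩ := h ![a, b] (by rcases hab with rfl | rfl <;> simp [funext_iff])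
    refine ⟨c, hc, ?_, ?_⟩
    · simpa [cbVec, Matrix.mulVec, dotProduct, Fin.sum_univ_two] using congrFun hcb 0
    · simpa [cbVec, Matrix.mulVec, dotProduct, Fin.sum_univ_two] using congrFun hcb 1
  obtain ⟨_, -, -, h₁₁⟩ := eigen 1 0 (.inl rfl)
  obtain ⟨_, -, h₂₀, -⟩ := eigen 0 1 (.inr rfl)
  obtain ⟨_, -, h₃₀, h₃₁⟩ := eigen 1 1 (.inl rfl)
  obtain ⟨c₄, hc₄, h₄₀, h₄₁⟩ := eigen 1 ω (.inl rfl)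
  simp only [one_pow, zero_pow hq, mul_one, mul_zero, add_zero, zero_add]
    at h₁₁ h₂₀ h₃₀ h₃₁ h₄₀ h₄₁
  apply hω
  apply mul_left_cancel₀ hc₄
  linear_combination h₄₁ - ω ^ q * h₄₀ + ω ^ q * (h₃₀ - h₃₁) + ((ω ^ q) ^ 2 - ω ^ q) * h₂₀ +
    (ω ^ q - 1) * h₁₁

end LineAtInfinity

section Collineations

variable {Fq F3 : Type} [Field Fq] [Fintype Fq] [Field F3] [Fintype F3] [Algebra Fq F3]
  {M B : Matrix (Fin 3) (Fin 3) F3}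

theorem isCpiGen_of_mul_map_pow_card_eq (h3 : Fintype.card F3 = Fintype.card Fq ^ 3)
    (hM : IsUnit M.det) (hB : IsUnit B.det) (hBM : B * M.map (· ^ Fintype.card Fq) = M) :
    IsCpiGen Fq F3 M B := by
  refine ⟨hB, ?_, fun P => ?_, ?_⟩
  · rintro P ⟨_, ⟨a, rfl⟩, hP⟩
    exact pe_cpiVec_rep_of_pe hP (by rw [cpiVec_mulVec Fq hBM, algebraMap_comp_pow_card])
  · rw [iterate_three_cpiVec_eq_self Fq hBM h3 hM]
    exact pe_rep P
  · obtain ⟨ω, hω⟩ := exists_pow_card_ne_self Fq (K := F3)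
      (h3 ▸ lt_self_pow₀ Fintype.one_lt_card (by norm_num))
    have hv : M *ᵥ ![1, ω, 0] ≠ 0 :=
      Matrix.mulVec_ne_zero_of_isUnit_det hM (by simp [funext_iff, Fin.forall_fin_succ])
    refine ⟨Projectivization.mk F3 _ hv, fun h => hω ?_⟩
    obtain ⟨c, hc⟩ := exists_eq_smul_pow_of_pe_cpiVec Fq hBM hM (pe_mk _ hv) h
    have h0 := congrFun hc 0
    have h1 := congrFun hc 1
    simp only [Matrix.cons_val_zero, Matrix.cons_val_one, Pi.smul_apply, Pi.pow_apply,
      one_pow, smul_eq_mul, mul_one] at h0 h1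
    rw [← h0, one_mul] at h1
    exact h1.symm

theorem isCbGen_submatrix_castSucc (h3 : Fintype.card F3 = Fintype.card Fq ^ 3)
    (hM : IsUnit M.det) (hB : IsUnit B.det) (hBM : B * M.map (· ^ Fintype.card Fq) = M)
    (hB0 : B 2 0 = 0) (hB1 : B 2 1 = 0) :
    IsCbGen Fq F3 M (B.submatrix Fin.castSucc Fin.castSucc) := by
  have hq : Fintype.card Fq ≠ 0 := Fintype.card_ne_zero
  have hlinf := cpiVec_linfEmbed hB0 hB1 hq
  refine ⟨?_, ?_, fun u _ => ⟨1, one_ne_zero, linfEmbed_injective ?_⟩, ?_⟩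
  · rw [det_eq_mul_det_submatrix_castSucc hB0 hB1] at hB
    exact isUnit_of_mul_isUnit_right hB
  · rintro P ⟨hPπ, hPl⟩
    obtain ⟨c, hc, hrep⟩ := (isCpiGen_of_mul_map_pow_card_eq h3 hM hB hBM).2.1 P hPπ
    rw [← linfEmbed_of_apply_two_eq_zero hPl, hlinf, ← linfEmbed_smul] at hrep
    refine ⟨c⁻¹, inv_ne_zero hc, ?_⟩
    conv_rhs => rw [linfEmbed_injective hrep]
    rw [smul_smul, inv_mul_cancel₀ hc, one_smul]
  · have hsemi : Function.Semiconj linfEmbed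
        (cbVec (Fintype.card Fq) (B.submatrix Fin.castSucc Fin.castSucc))
        (cpiVec (Fintype.card Fq) B) := fun u => (hlinf u).symm
    rw [one_smul, hsemi.iterate_right 3 u, iterate_three_cpiVec_eq_self Fq hBM h3 hM]
  · obtain ⟨ω, hω⟩ := exists_pow_card_ne_self Fq (K := F3)
      (h3 ▸ lt_self_pow₀ Fintype.one_lt_card (by norm_num))
    exact exists_ne_zero_not_eigen_cbVec hq _ hω

end Collineations

section ConicPoints

variable {K : Type*} [Field K]

lemma veronese_ne_zero (z : K) : (![1, z, z ^ 2] : Fin 3 → K) ≠ 0 := fun h => by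
  simpa using congrFun h 0

lemma veronese_pow (z : K) (n : ℕ) :
    (![1, z, z ^ 2] : Fin 3 → K) ^ n = ![1, z ^ n, (z ^ n) ^ 2] := by
  funext i
  fin_cases i <;> simp [← pow_mul, mul_comm]

lemma exists_pe_mulVec_veronese {A : Matrix (Fin 3) (Fin 3) K} (hA : IsUnit A.det) (z : K) :
    ∃ P : Projectivization K (Fin 3 → K), pe P (A *ᵥ ![1, z, z ^ 2]) :=
  ⟨_, pe_mk _ (Matrix.mulVec_ne_zero_of_isUnit_det hA (veronese_ne_zero z))⟩

lemma eq_of_pe_mulVec_veronese {A : Matrix (Fin 3) (Fin 3) K} (hA : IsUnit A.det)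
    {P : Projectivization K (Fin 3 → K)} {z z' : K} (hz : pe P (A *ᵥ ![1, z, z ^ 2]))
    (hz' : pe P (A *ᵥ ![1, z', z' ^ 2])) : z = z' := by
  obtain ⟨c, hc, hrep⟩ := hz
  obtain ⟨c', -, hrep'⟩ := hz'
  rw [hrep', ← Matrix.mulVec_smul, ← Matrix.mulVec_smul] at hrep
  have h := Matrix.mulVec_injective_of_isUnit_det hA hrep
  have h0 := congrFun h 0
  have h1 := congrFun h 1
  simp only [Pi.smul_apply, Matrix.cons_val_zero, Matrix.cons_val_one, smul_eq_mul,
    mul_one] at h0 h1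
  rw [h0] at h1
  exact (mul_left_cancel₀ hc h1).symm

variable {L : Type*} [Field L] [Algebra K L]

lemma pe_rep_pow_card [Fintype K] (A : Matrix (Fin 3) (Fin 3) K)
    {P P' : Projectivization L (Fin 3 → L)} {w : Fin 3 → L}
    (hP : pe P (A.map (algebraMap K L) *ᵥ w))
    (hP' : pe P' (A.map (algebraMap K L) *ᵥ w ^ Fintype.card K)) :
    pe P' (P.rep ^ Fintype.card K) := by
  have hA : (A.map (algebraMap K L)).map (· ^ Fintype.card K) = A.map (algebraMap K L) := by
    ext i j
    simp [← map_pow, FiniteField.pow_card]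
  obtain ⟨c, hc, hrep⟩ := hP
  rw [hrep, _root_.smul_pow, mulVec_pow_card K, hA]
  exact hP'.smul (pow_ne_zero _ hc)

lemma not_exists_rep_eq_smul_algebraMap {A : Matrix (Fin 3) (Fin 3) K} (hA : IsUnit A.det)
    {P : Projectivization L (Fin 3 → L)} {z : L}
    (hP : pe P (A.map (algebraMap K L) *ᵥ ![1, z, z ^ 2]))
    (hz : z ∉ Set.range (algebraMap K L)) :
    ¬∃ (u : Fin 3 → K) (c : L), c ≠ 0 ∧ P.rep = c • fun i => algebraMap K L (u i) := by
  rintro ⟨u, c, -, hu⟩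
  obtain ⟨v, rfl⟩ := Matrix.mulVec_surjective_iff_isUnit.mpr ((A.isUnit_iff_isUnit_det).mpr hA) u
  obtain ⟨d, hd, hrep⟩ := hP
  have hmap : (fun i => algebraMap K L ((A *ᵥ v) i)) =
      A.map (algebraMap K L) *ᵥ fun i => algebraMap K L (v i) := by
    funext i
    exact RingHom.map_mulVec _ A v i
  rw [hu, hmap, ← Matrix.mulVec_smul, ← Matrix.mulVec_smul] at hrep
  have h := Matrix.mulVec_injective_of_isUnit_det (Matrix.isUnit_det_map _ hA) hrep
  have h0 := congrFun h 0
  have h1 := congrFun h 1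
  simp only [Pi.smul_apply, Matrix.cons_val_zero, Matrix.cons_val_one, smul_eq_mul,
    mul_one] at h0 h1
  have hc0 : c * algebraMap K L (v 0) ≠ 0 := h0 ▸ hd
  refine hz ⟨v 1 / v 0, ?_⟩
  rw [map_div₀, div_eq_iff (right_ne_zero_of_mul hc0)]
  apply mul_left_cancel₀ (left_ne_zero_of_mul hc0)
  linear_combination h1 - z * h0

end ConicPoints

lemma exists_eq_smul_of_two_le_finrank_ker {k W : Type*} [Field k] [AddCommGroup W] [Module k W]
    (v : Fin 3 → W) (h : 2 ≤ Module.finrank k (LinearMap.ker (Fintype.linearCombination k v))) :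
    ∃ (l : W) (t : Fin 3 → k), ∀ j, v j = t j • l := by
  set L := Fintype.linearCombination k v
  have hrange : Module.finrank k (LinearMap.range L) ≤ 1 := by
    have := L.finrank_range_add_finrank_ker
    simp only [Module.finrank_fin_fun] at this
    omega
  obtain ⟨l, hl⟩ := finrank_le_one_iff.mp hrange
  have hv : ∀ j, ∃ s : k, v j = s • (l : W) := fun j => by
    obtain ⟨s, hs⟩ := hl ⟨v j, Pi.single j 1, by simp [L, Fintype.linearCombination_apply]⟩
    exact ⟨s, (congrArg Subtype.val hs).symm⟩
  choose t ht using hv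
  exact ⟨l, t, ht⟩

section Conics

variable {Fq F3 F6 : Type} [Field Fq] [Field F3] [Field F6] [Algebra Fq F3] [Algebra F3 F6]
  {M : Matrix (Fin 3) (Fin 3) F3}

theorem SecantSubplane.exists_row_two_eq_smul [Fintype Fq] (hsec : SecantSubplane Fq F3 M) :
    ∃ (l : F3) (t : Fin 3 → Fq), ∀ j, M 2 j = t j • l := by
  have hlt : 1 < (subplaneOf Fq F3 M ∩ linf F3).ncard := by
    rw [hsec]
    exact Nat.lt_add_of_pos_left Fintype.card_pos
  obtain ⟨P, ⟨⟨_, ⟨a, rfl⟩, hPa⟩, hPl⟩, P', ⟨⟨_, ⟨a', rfl⟩, hPa'⟩, hP'l⟩, hne⟩ :=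
    (Set.one_lt_ncard (Set.finite_of_ncard_pos (by omega))).mp hlt
  set L := Fintype.linearCombination Fq (M 2)
  have hL : ∀ b, L b = (M *ᵥ fun i => algebraMap Fq F3 (b i)) 2 := fun b => by
    simp [L, Fintype.linearCombination_apply, Matrix.mulVec, dotProduct, Algebra.smul_def,
      mul_comm]
  have hsmul : ∀ (s : Fq) (b : Fin 3 → Fq), (M *ᵥ fun i => algebraMap Fq F3 ((s • b) i)) =
      algebraMap Fq F3 s • (M *ᵥ fun i => algebraMap Fq F3 (b i)) := fun s b => by
    rw [← Matrix.mulVec_smul]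
    congr 1
    funext i
    simp
  have ha : a ∈ LinearMap.ker L := by
    rw [LinearMap.mem_ker, hL]
    exact (hPa.apply_eq_zero_iff 2).mp hPl
  have ha' : a' ∈ LinearMap.ker L := by
    rw [LinearMap.mem_ker, hL]
    exact (hPa'.apply_eq_zero_iff 2).mp hP'l
  -- distinct points of `π̄ ∩ ℓ∞` come from non-proportional vectors over `F_q`
  have hker : 2 ≤ Module.finrank Fq (LinearMap.ker L) := by
    by_contra! h
    obtain ⟨v, hv⟩ := finrank_le_one_iff.mp (Nat.le_of_lt_succ h)
    obtain ⟨s, hs⟩ := hv ⟨a, ha⟩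
    obtain ⟨s', hs'⟩ := hv ⟨a', ha'⟩
    rw [Subtype.ext_iff] at hs hs'
    simp only [SetLike.val_smul] at hs hs'
    rw [← hs, hsmul] at hPa
    rw [← hs', hsmul] at hPa'
    exact hne (hPa.of_smul.unique hPa'.of_smul)
  exact exists_eq_smul_of_two_le_finrank_ker (M 2) hker

lemma conicOf_subset_conicPlusOf : conicOf Fq F3 M ⊆ conicPlusOf F3 M := by
  rintro P ⟨u, ⟨θ, rfl⟩ | rfl, hP⟩
  · refine ⟨_, .inl ⟨algebraMap Fq F3 θ, ?_⟩, hP⟩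
    congr 1
    funext i
    fin_cases i <;> simp
  · exact ⟨_, .inr rfl, hP⟩

lemma apply_two_ne_zero_of_conicPlusOf_inter_linf_eq_empty
    (hext : conicPlusOf F3 M ∩ linf F3 = ∅) (hM : IsUnit M.det) {w : Fin 3 → F3}
    (hw : w ∈ conicPlusVecs F3 M) : w 2 ≠ 0 := fun h2 => by
  have hw0 : w ≠ 0 := by
    rcases hw with ⟨θ, rfl⟩ | rfl
    · exact Matrix.mulVec_ne_zero_of_isUnit_det hM (veronese_ne_zero θ)
    · exact Matrix.mulVec_ne_zero_of_isUnit_det hM (by simp [funext_iff, Fin.forall_fin_succ])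
  exact Set.eq_empty_iff_forall_notMem.mp hext _
    ⟨⟨w, hw, pe_mk w hw0⟩, ((pe_mk w hw0).apply_eq_zero_iff 2).mpr h2⟩

lemma apply_two_two_ne_zero_of_conicPlusOf_inter_linf_eq_empty
    (hext : conicPlusOf F3 M ∩ linf F3 = ∅) (hM : IsUnit M.det) : M 2 2 ≠ 0 := by
  simpa [Matrix.mulVec, dotProduct, Fin.sum_univ_three] using
    apply_two_ne_zero_of_conicPlusOf_inter_linf_eq_empty hext hM (.inr rfl)

theorem exists_conjugate_roots_of_conicPlusOf_inter_linf_eq_empty [Fintype Fq] [Fintype F6]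
    [Algebra Fq F6] [IsScalarTower Fq F3 F6] (h6 : Fintype.card F6 = Fintype.card Fq ^ 6)
    (hM : IsUnit M.det) (hext : conicPlusOf F3 M ∩ linf F3 = ∅) {l : F3} {t : Fin 3 → Fq}
    (ht : ∀ j, M 2 j = t j • l) :
    ∃ θ : F6, θ ^ Fintype.card Fq ≠ θ ∧ θ ^ Fintype.card Fq ^ 2 = θ ∧
      (∀ z, (M.map (algebraMap F3 F6) *ᵥ ![1, z, z ^ 2]) 2 = 0 ↔
        z = θ ∨ z = θ ^ Fintype.card Fq) ∧
      ∀ z, (M.map (algebraMap F3 F6) *ᵥ ![1, z, z ^ 2]) 2 = 0 →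
        z ∉ Set.range (algebraMap F3 F6) := by
  have hM22 := apply_two_two_ne_zero_of_conicPlusOf_inter_linf_eq_empty hext hM
  have hl : l ≠ 0 := by
    rintro rfl
    simp [ht] at hM22
  have ht2 : t 2 ≠ 0 := by
    intro h
    simp [ht, h] at hM22
  have hroot : ∀ x : F3, aeval x (rowQuadratic t) ≠ 0 := fun x hx =>
    apply_two_ne_zero_of_conicPlusOf_inter_linf_eq_empty hext hM (.inl ⟨x, rfl⟩)
      (by rw [mulVec_veronese_apply_two ht, hx, mul_zero])
  obtain ⟨θ, hθq, hθ2, hroots⟩ := exists_conjugate_roots_rowQuadratic (K := F6) ht2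
    (fun x hx => hroot (algebraMap Fq F3 x) (by
      rw [aeval_algebraMap_apply_eq_algebraMap_eval, hx, map_zero])) h6 (by norm_num)
  have ht6 : ∀ j, M.map (algebraMap F3 F6) 2 j = t j • algebraMap F3 F6 l := fun j => by
    simp [ht, Algebra.smul_def, ← IsScalarTower.algebraMap_apply]
  refine ⟨θ, hθq, hθ2, fun z => ?_, ?_⟩
  · rw [mulVec_veronese_apply_two ht6, mul_eq_zero, hroots]
    simp [hl]
  · rintro z hz ⟨y, rfl⟩
    rw [mulVec_veronese_apply_two ht6, aeval_algebraMap_apply] at hz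
    simp [hl, hroot y] at hz

lemma conicPPOf_inter_linfe_eq (hext : conicPlusOf F3 M ∩ linf F3 = ∅) (hM : IsUnit M.det)
    {θ θ' : F6}
    (hroots : ∀ z, (M.map (algebraMap F3 F6) *ᵥ ![1, z, z ^ 2]) 2 = 0 ↔ z = θ ∨ z = θ')
    {P P' : Pt2e F6} (hP : pe P (M.map (algebraMap F3 F6) *ᵥ ![1, θ, θ ^ 2]))
    (hP' : pe P' (M.map (algebraMap F3 F6) *ᵥ ![1, θ', θ' ^ 2])) :
    conicPPOf F3 F6 M ∩ linfe F6 = {P, P'} := by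
  ext Q
  simp only [Set.mem_inter_iff, Set.mem_insert_iff, Set.mem_singleton_iff]
  constructor
  · rintro ⟨⟨u, hu, hQ⟩, hQl⟩
    have hu2 : u 2 = 0 := (hQ.apply_eq_zero_iff 2).mp hQl
    rcases hu with ⟨z, rfl⟩ | rfl
    · rcases (hroots z).mp hu2 with rfl | rfl
      exacts [.inl (hQ.unique hP), .inr (hQ.unique hP')]
    · exact absurd (by simpa [Matrix.mulVec, dotProduct, Fin.sum_univ_three] using hu2)
        (apply_two_two_ne_zero_of_conicPlusOf_inter_linf_eq_empty hext hM)
  · rintro (rfl | rfl)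
    · exact ⟨⟨_, .inl ⟨θ, rfl⟩, hP⟩, (hP.apply_eq_zero_iff 2).mpr ((hroots θ).mpr (.inl rfl))⟩
    · exact ⟨⟨_, .inl ⟨θ', rfl⟩, hP'⟩, (hP'.apply_eq_zero_iff 2).mpr ((hroots θ').mpr (.inr rfl))⟩

end Conics

/-- Result 3.2, case [S3]: for an `F_q`-conic `C̄` in a secant
`F_q`-subplane with `C̄⁺` exterior to `ℓ∞`, the conic `C̄⁺⁺` meets `ℓ∞⁺⁺` in two distinct
non-rational points `P̄, Q̄` with `Q̄ = P̄^{c̄_π} = P̄^{q³}`, `P̄^{c̄_π²} = P̄` and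
`P̄^{c̄_b} = Q̄` where `b̄ = π̄ ∩ ℓ∞`. -/
theorem secant_conic_exterior_infinity (Fq F3 F6 : Type) [Field Fq] [Field F3] [Field F6]
    [Fintype Fq] [Fintype F3] [Fintype F6]
    [Algebra Fq F3] [Algebra F3 F6] [Algebra Fq F6] [IsScalarTower Fq F3 F6]
    (h3 : Fintype.card F3 = Fintype.card Fq ^ 3)
    (h6 : Fintype.card F6 = Fintype.card Fq ^ 6)
    (M : Matrix (Fin 3) (Fin 3) F3) (hM : IsUnit M.det)
    (hsec : SecantSubplane Fq F3 M)
    (hext : conicPlusOf F3 M ∩ linf F3 = ∅) :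
    conicOf Fq F3 M ∩ linf F3 = ∅ ∧
    ∃ Pb Qb : Pt2e F6, Pb ≠ Qb ∧ Pb ∈ linfe F6 ∧ Qb ∈ linfe F6 ∧
      (¬ ∃ (u : Fin 3 → F3) (c : F6), c ≠ 0 ∧
        Pb.rep = c • fun i => algebraMap F3 F6 (u i)) ∧
      (¬ ∃ (u : Fin 3 → F3) (c : F6), c ≠ 0 ∧
        Qb.rep = c • fun i => algebraMap F3 F6 (u i)) ∧
      conicPPOf F3 F6 M ∩ linfe F6 = {Pb, Qb} ∧
      ∃ B : Matrix (Fin 3) (Fin 3) F3, IsCpiGen Fq F3 M B ∧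
        pe Qb (cpiVec (Fintype.card Fq) (B.map (algebraMap F3 F6)) Pb.rep) ∧
        pe Qb (fun i => Pb.rep i ^ Fintype.card Fq ^ 3) ∧
        pe Pb ((cpiVec (Fintype.card Fq) (B.map (algebraMap F3 F6)))^[2] Pb.rep) ∧
        ∃ D : Matrix (Fin 2) (Fin 2) F3, IsCbGen Fq F3 M D ∧
          ∃ a b a' b' : F6, pe Pb ![a, b, 0] ∧ pe Qb ![a', b', 0] ∧
            ∃ c : F6, c ≠ 0 ∧
              cbVec (Fintype.card Fq) (D.map (algebraMap F3 F6)) ![a, b] = c • ![a', b'] := by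
  obtain ⟨l, t, ht⟩ := hsec.exists_row_two_eq_smul
  obtain ⟨θ, hθq, hθ2, hroots, hirr⟩ :=
    exists_conjugate_roots_of_conicPlusOf_inter_linf_eq_empty h6 hM hext ht
  obtain ⟨B, hB, hBM, hB0, hB1⟩ := exists_mul_map_pow_card_eq_of_row Fq hM ht
  have hBM6 := Matrix.map_mul_map_pow_eq (algebraMap F3 F6) hBM
  have hM6 := Matrix.isUnit_det_map (algebraMap F3 F6) hM
  obtain ⟨Pb, hPb⟩ := exists_pe_mulVec_veronese hM6 θ
  obtain ⟨Qb, hQb⟩ := exists_pe_mulVec_veronese hM6 (θ ^ Fintype.card Fq)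
  have hθ6 := (hroots θ).mpr (.inl rfl)
  have hθq6 := (hroots _).mpr (.inr rfl)
  have hθ3 : θ ^ Fintype.card F3 = θ ^ Fintype.card Fq := by rw [h3, pow_succ, pow_mul, hθ2]
  refine ⟨Set.subset_eq_empty (Set.inter_subset_inter_left _ conicOf_subset_conicPlusOf) hext,
    Pb, Qb, fun h => hθq (eq_of_pe_mulVec_veronese hM6 hQb (h ▸ hPb)),
    (hPb.apply_eq_zero_iff 2).mpr hθ6, (hQb.apply_eq_zero_iff 2).mpr hθq6,
    not_exists_rep_eq_smul_algebraMap hM hPb (hirr _ hθ6),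
    not_exists_rep_eq_smul_algebraMap hM hQb (hirr _ hθq6),
    conicPPOf_inter_linfe_eq hext hM hroots hPb hQb, B,
    isCpiGen_of_mul_map_pow_card_eq h3 hM hB hBM,
    pe_iterate_cpiVec_rep Fq hBM6 1 hPb (by rwa [pow_one, veronese_pow]),
    h3 ▸ pe_rep_pow_card M hPb (by rwa [veronese_pow, hθ3]),
    pe_iterate_cpiVec_rep Fq hBM6 2 hPb (by rwa [veronese_pow, hθ2]),
    _, isCbGen_submatrix_castSucc h3 hM hB hBM hB0 hB1, _, _, _, _,
    hPb.linfEmbed hθ6, hQb.linfEmbed hθq6, 1, one_ne_zero, ?_⟩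
  rw [one_smul, ← veronese_pow]
  rw [← veronese_pow] at hθq6
  exact cbVec_submatrix_castSucc_pair Fq hBM6 (by simp [hB0]) (by simp [hB1]) hθ6 hθq6
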